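/- arXiv:2209.04489 — 6 statements merged into one kernel-verified Lean document; each statement's English description precedes it below -/
import Mathlib

section
/- Let R be a commutative ring with identity that is radically finite, and let P be a prime ideal of R of finite height. Then P is a finitely generated ideal of R. -/
/-- The height of an ideal `I`: the infimum of the heights (in the prime spectrum)
of the prime ideals containing `I`. -/
noncomputable def idealHeight (R : Type*) [CommRing R] (I : Ideal R) : ℕ∞ :=
  ⨅ P : {P : PrimeSpectrum R // I ≤ P.asIdeal}, Order.height P.1

/-- An ideal `I` is radically perfect if its height equals the least number `n` such that
`√I` is the radical of an ideal generated by `n` elements, and moreover, if `ht I = 0`,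
then `√I` is the radical of a principal ideal generated by a zero divisor. -/
def RadicallyPerfect {R : Type*} [CommRing R] (I : Ideal R) : Prop :=
  idealHeight R I = sInf {n : ℕ∞ | ∃ s : Finset R,
      (s.card : ℕ∞) = n ∧ (Ideal.span (s : Set R)).radical = I.radical} ∧
    (idealHeight R I = 0 → ∃ θ : R, θ ∉ nonZeroDivisors R ∧
      I.radical = (Ideal.span {θ} : Ideal R).radical)

/-- The set of ideals of `R` generated by `ht P` elements whose radical equals `P`. -/
def genHtRad {R : Type*} [CommRing R] (P : Ideal R) : Set (Ideal R) :=
  {A | ∃ s : Finset R, (s.card : ℕ∞) = idealHeight R P ∧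
    Ideal.span (s : Set R) = A ∧ A.radical = P}

/-- A commutative ring `R` is radically finite if every prime ideal `P` of `R` is radically
perfect, the set of ideals generated by `ht P` elements with radical `P` has a maximal
member `A`, and every chain of ideals between `A` and `P` is finite. -/
def RadicallyFinite (R : Type*) [CommRing R] : Prop :=
  ∀ P : Ideal R, P.IsPrime → RadicallyPerfect P ∧
    ∃ A ∈ genHtRad P, (∀ B ∈ genHtRad P, A ≤ B → B = A) ∧
      ∀ C : Set (Ideal R), IsChain (· ≤ ·) C → C ⊆ Set.Icc A P → C.Finite

/-- A ring is of finite character if each nonzero element lies in only finitely many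
maximal ideals. -/
def FiniteCharacter (R : Type*) [CommRing R] : Prop :=
  ∀ x : R, x ≠ 0 → {M : Ideal R | M.IsMaximal ∧ x ∈ M}.Finite

lemma myaux {R : Type*} [CommRing R] (A P : Ideal R) (hAfg : A.FG) (hAP : A ≤ P)
    (hchain : ∀ C : Set (Ideal R), IsChain (· ≤ ·) C → C ⊆ Set.Icc A P → C.Finite) :
    P.FG := by
  by_contra hnfg
  have key : ∀ B : Ideal R, B.FG → B ≤ P → ∃ C : Ideal R, C.FG ∧ C ≤ P ∧ B < C := by
    intro B hB hBP
    have hne : B ≠ P := fun h => hnfg (h ▸ hB)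
    obtain ⟨x, hxP, hxB⟩ := SetLike.exists_of_lt (lt_of_le_of_ne hBP hne)
    refine ⟨B ⊔ Ideal.span {x}, Submodule.FG.sup hB ⟨{x}, by simp⟩,
      sup_le hBP (Ideal.span_le.2 (by simpa using hxP)),
      lt_of_le_of_ne le_sup_left ?_⟩
    intro h
    exact hxB (h ▸ Ideal.mem_sup_right (Ideal.mem_span_singleton_self x))
  let f : ℕ → {B : Ideal R // B.FG ∧ B ≤ P} := fun n =>
    Nat.rec ⟨A, hAfg, hAP⟩
      (fun _ p => ⟨(key p.1 p.2.1 p.2.2).choose, (key p.1 p.2.1 p.2.2).choose_spec.1,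
        (key p.1 p.2.1 p.2.2).choose_spec.2.1⟩) n
  have hlt : ∀ n, (f n).1 < (f (n + 1)).1 := fun n =>
    (key (f n).1 (f n).2.1 (f n).2.2).choose_spec.2.2
  have hmono : StrictMono (fun n => (f n).1) := strictMono_nat_of_lt_succ hlt
  have hA : ∀ n, A ≤ (f n).1 := fun n => (hmono.monotone (Nat.zero_le n) :)
  have hC : IsChain (· ≤ ·) (Set.range fun n => (f n).1) := by
    rintro _ ⟨m, rfl⟩ _ ⟨n, rfl⟩ _
    exact (le_total m n).imp (fun h => hmono.monotone h) (fun h => hmono.monotone h)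
  have hfin := hchain _ hC (by rintro _ ⟨n, rfl⟩; exact ⟨hA n, (f n).2.2⟩)
  exact Set.infinite_range_of_injective hmono.injective hfin

/-- If `R` is radically finite and `P` is a prime ideal of `R` of finite height,
then `P` is finitely generated. -/
theorem radicallyFinite_prime_fg {R : Type*} [CommRing R]
    (hR : RadicallyFinite R) (P : Ideal R) (hP : P.IsPrime)
    (hht : idealHeight R P < ⊤) : P.FG := by
  obtain ⟨-, A, ⟨s, -, hspan, hrad⟩, -, hchain⟩ := hR P hP
  exact myaux A P ⟨s, hspan⟩ (hrad ▸ hspan ▸ Ideal.le_radical) hchain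
end

section
/- Every commutative ring with identity of finite Krull dimension that is radically finite is Noetherian. -/
/-!
By Cohen's theorem it suffices that every prime `P` is finitely generated. Radical finiteness
provides a finitely generated `A ≤ P` such that every chain of ideals between `A` and `P` is
finite, so ideals in `[A, P]` satisfy the ascending chain condition; enlarging a finitely
generated ideal of `[A, P]` by one element of `P` at a time must therefore reach `P`.
-/

theorem Set.wellFoundedOn_gt_of_forall_isChain_finite {α : Type*} [Preorder α] {s : Set α}
    (h : ∀ C : Set α, IsChain (· ≤ ·) C → C ⊆ s → C.Finite) : s.WellFoundedOn (· > ·) := by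
  rw [Set.wellFoundedOn_iff_no_descending_seq]
  intro f hfs
  have hf : StrictMono f := fun _ _ hmn => f.map_rel_iff.mpr hmn
  exact Set.infinite_range_of_injective hf.injective
    (h _ hf.monotone.isChain_range (Set.range_subset_iff.mpr hfs))

theorem Submodule.fg_of_fg_of_wellFoundedOn_Icc {R M : Type*} [Semiring R] [AddCommMonoid M]
    [Module R M] {A P : Submodule R M} (hAP : A ≤ P) (hA : A.FG)
    (hwf : (Set.Icc A P).WellFoundedOn (· > ·)) : P.FG := by
  suffices ∀ B ∈ Set.Icc A P, B.FG → P.FG from this A ⟨le_rfl, hAP⟩ hA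
  intro B hB
  refine hwf.induction hB (P := fun B => B.FG → P.FG) fun B ⟨hAB, hBP⟩ ih hBfg => ?_
  obtain rfl | hlt := hBP.eq_or_lt
  · exact hBfg
  obtain ⟨x, hxP, hxB⟩ := SetLike.exists_of_lt hlt
  have hxle : span R {x} ≤ P := (span_singleton_le_iff_mem x P).mpr hxP
  have hBlt : B < B ⊔ span R {x} := left_lt_sup.mpr ((span_singleton_le_iff_mem x B).not.mpr hxB)
  exact ih _ ⟨hAB.trans le_sup_left, sup_le hBP hxle⟩ hBlt (hBfg.sup (fg_span_singleton x))

theorem RadicallyFinite.fg_of_isPrime {R : Type*} [CommRing R] (hR : RadicallyFinite R)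
    {P : Ideal R} (hP : P.IsPrime) : P.FG := by
  obtain ⟨-, A, ⟨s, -, rfl, hrad⟩, -, hchain⟩ := hR P hP
  have hAP : Ideal.span (s : Set R) ≤ P := hrad ▸ Ideal.le_radical
  exact Submodule.fg_of_fg_of_wellFoundedOn_Icc hAP ⟨s, rfl⟩
    (Set.wellFoundedOn_gt_of_forall_isChain_finite hchain)

theorem radicallyFinite_isNoetherianRing_general {R : Type*} [CommRing R]
    (hR : RadicallyFinite R) : IsNoetherianRing R :=
  IsNoetherianRing.of_prime fun _ hP => hR.fg_of_isPrime hP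

/-- Every radically finite commutative ring of finite Krull dimension is Noetherian. -/
theorem radicallyFinite_isNoetherianRing {R : Type*} [CommRing R]
    (hdim : ringKrullDim R < ⊤) (hR : RadicallyFinite R) : IsNoetherianRing R :=
  radicallyFinite_isNoetherianRing_general hR
end

section
/- Let R be a Bézout domain (an integral domain in which every finitely generated ideal is principal) of finite Krull dimension. Then R is radically finite if and only if R is a principal ideal domain. -/
/-!
In a domain a nonzero prime `P` has positive height, while radical perfection bounds its height by
the number of generators of any ideal with radical `P`; in a Bézout ring the members of
`genHtRad P` are principal, so every nonzero prime has height one. For a maximal member `A` of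
`genHtRad P` and `x ∈ P`, the ideal `A + (x)` is finitely generated, hence principal, with radical
`P`, so it lies in `genHtRad P` and equals `A`: thus `P = A` is principal. Conversely, in a PID
every prime `P` is itself the maximal member of `genHtRad P`, which makes the chain condition
trivial.
-/

section

open Ideal

variable {R : Type*} [CommRing R]

theorem idealHeight_eq_height (I : Ideal R) : idealHeight R I = I.height := by
  apply le_antisymm
  · rw [height_eq_inf_minimalPrimes]
    refine le_iInf₂ fun J hJ => ?_
    have hJ' : J.IsPrime := hJ.1.1
    calc idealHeight R I ≤ Order.height (⟨J, hJ'⟩ : PrimeSpectrum R) :=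
          iInf_le (fun P : {P : PrimeSpectrum R // I ≤ P.asIdeal} => Order.height P.1) ⟨_, hJ.1.2⟩
      _ = J.height := (PrimeSpectrum.height_eq_orderHeight _).symm
  · exact le_iInf fun P => (height_mono P.2).trans_eq (PrimeSpectrum.height_eq_orderHeight _)

theorem idealHeight_eq_zero_iff [IsDomain R] {I : Ideal R} : idealHeight R I = 0 ↔ I = ⊥ := by
  rw [idealHeight_eq_height, height_eq_zero_iff_eq_bot]

noncomputable def arithmeticRank (I : Ideal R) : ℕ∞ :=
  sInf {n : ℕ∞ | ∃ s : Finset R, (s.card : ℕ∞) = n ∧ (span (s : Set R)).radical = I.radical}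

theorem radicallyPerfect_iff (I : Ideal R) : RadicallyPerfect I ↔
    idealHeight R I = arithmeticRank I ∧ (idealHeight R I = 0 → ∃ θ : R,
      θ ∉ nonZeroDivisors R ∧ I.radical = (span {θ} : Ideal R).radical) :=
  Iff.rfl

theorem arithmeticRank_eq_zero_iff {I : Ideal R} :
    arithmeticRank I = 0 ↔ I.radical = (⊥ : Ideal R).radical := by
  rw [arithmeticRank, ENat.sInf_eq_zero]
  simp [eq_comm]

theorem arithmeticRank_le_one_of_isPrincipal {I J : Ideal R} (hJ : J.IsPrincipal)
    (hrad : J.radical = I.radical) : arithmeticRank I ≤ 1 := by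
  obtain ⟨a, rfl⟩ := hJ
  exact sInf_le ⟨{a}, by simp, by simpa using hrad⟩

theorem radicallyPerfect_bot [Nontrivial R] : RadicallyPerfect (⊥ : Ideal R) := by
  refine (radicallyPerfect_iff _).mpr ⟨?_, fun _ => ⟨0, zero_notMem_nonZeroDivisors, by simp⟩⟩
  rw [idealHeight_eq_height, height_bot, eq_comm, arithmeticRank_eq_zero_iff]

theorem radicallyPerfect_of_idealHeight_eq_one [IsDomain R] {I : Ideal R}
    (h1 : idealHeight R I = 1) (hI : I.IsPrincipal) : RadicallyPerfect I := by
  refine (radicallyPerfect_iff I).mpr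
    ⟨le_antisymm ?_ (h1 ▸ arithmeticRank_le_one_of_isPrincipal hI rfl), by simp [h1]⟩
  rw [h1, Order.one_le_iff_ne_zero, Ne, arithmeticRank_eq_zero_iff, isPrime_bot.radical]
  intro hrad
  have hI0 : I = ⊥ := le_bot_iff.mp (hrad ▸ le_radical)
  exact one_ne_zero (h1 ▸ idealHeight_eq_zero_iff.mpr hI0)

theorem idealHeight_eq_one_of_isPrime_of_ne_bot [IsDomain R] [Ring.KrullDimLE 1 R] {P : Ideal R}
    [P.IsPrime] (hP : P ≠ ⊥) : idealHeight R P = 1 := by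
  refine le_antisymm ?_ (Order.one_le_iff_ne_zero.mpr (idealHeight_eq_zero_iff.not.mpr hP))
  rw [idealHeight_eq_height]
  exact_mod_cast height_le_ringKrullDim_of_isPrime.trans (Ring.krullDimLE_iff.mp ‹_›)

theorem radical_eq_of_mem_genHtRad {P A : Ideal R} (hA : A ∈ genHtRad P) : A.radical = P :=
  let ⟨_, _, _, hrad⟩ := hA; hrad

theorem fg_of_mem_genHtRad {P A : Ideal R} (hA : A ∈ genHtRad P) : A.FG :=
  let ⟨s, _, hs, _⟩ := hA; ⟨s, hs⟩

theorem mem_genHtRad_of_isPrincipal {P B : Ideal R} (h1 : idealHeight R P = 1)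
    (hB : B.IsPrincipal) (hrad : B.radical = P) : B ∈ genHtRad P := by
  obtain ⟨b, rfl⟩ := hB
  exact ⟨{b}, by simp [h1], by simp, hrad⟩

theorem bot_mem_genHtRad_bot [IsDomain R] : (⊥ : Ideal R) ∈ genHtRad ⊥ :=
  ⟨∅, by simp [idealHeight_eq_height], by simp, isPrime_bot.radical⟩

theorem eq_of_maximal_mem_genHtRad [IsBezout R] {P A : Ideal R} (hP : P.IsPrime)
    (h1 : idealHeight R P = 1) (hA : A ∈ genHtRad P)
    (hmax : ∀ B ∈ genHtRad P, A ≤ B → B = A) : A = P := by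
  have hAP : A ≤ P := radical_eq_of_mem_genHtRad hA ▸ le_radical
  refine le_antisymm hAP fun x hx => ?_
  set B := A ⊔ span {x}
  have hBP : B ≤ P := sup_le hAP ((span_singleton_le_iff_mem P).mpr hx)
  have hBrad : B.radical = P := le_antisymm (hP.radical ▸ radical_mono hBP)
    (radical_eq_of_mem_genHtRad hA ▸ radical_mono le_sup_left)
  have hB : B.IsPrincipal := IsBezout.isPrincipal_of_FG B
    (Submodule.FG.sup (fg_of_mem_genHtRad hA) (Submodule.fg_span_singleton x))
  rw [← hmax B (mem_genHtRad_of_isPrincipal h1 hB hBrad) le_sup_left]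
  exact Submodule.mem_sup_right (mem_span_singleton_self x)

theorem radicallyFinite_of_forall_mem_genHtRad_self
    (h : ∀ P : Ideal R, P.IsPrime → RadicallyPerfect P ∧ P ∈ genHtRad P) :
    RadicallyFinite R := by
  intro P hP
  obtain ⟨hperf, hPmem⟩ := h P hP
  refine ⟨hperf, P, hPmem, fun B hB hPB => ?_, fun C _ hC => ?_⟩
  · exact le_antisymm (radical_eq_of_mem_genHtRad hB ▸ le_radical) hPB
  · exact (Set.finite_singleton P).subset (Set.Icc_self P ▸ hC)

theorem radicallyFinite_of_isPrincipalIdealRing [IsDomain R] [IsPrincipalIdealRing R] :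
    RadicallyFinite R := by
  refine radicallyFinite_of_forall_mem_genHtRad_self fun P hP => ?_
  obtain rfl | hP0 := eq_or_ne P ⊥
  · exact ⟨radicallyPerfect_bot, bot_mem_genHtRad_bot⟩
  have h1 := idealHeight_eq_one_of_isPrime_of_ne_bot hP0
  exact ⟨radicallyPerfect_of_idealHeight_eq_one h1 (IsPrincipalIdealRing.principal P),
    mem_genHtRad_of_isPrincipal h1 (IsPrincipalIdealRing.principal P) hP.radical⟩

theorem isPrincipal_of_radicallyFinite [IsDomain R] [IsBezout R] (hR : RadicallyFinite R)
    {P : Ideal R} (hP : P.IsPrime) : P.IsPrincipal := by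
  obtain ⟨hperf, A, hA, hmax, -⟩ := hR P hP
  obtain rfl | hP0 := eq_or_ne P ⊥
  · exact bot_isPrincipal
  have hAprin : A.IsPrincipal := IsBezout.isPrincipal_of_FG A (fg_of_mem_genHtRad hA)
  have h1 : idealHeight R P = 1 := le_antisymm
    (((radicallyPerfect_iff P).mp hperf).1 ▸ arithmeticRank_le_one_of_isPrincipal hAprin
      ((radical_eq_of_mem_genHtRad hA).trans hP.radical.symm))
    (Order.one_le_iff_ne_zero.mpr (idealHeight_eq_zero_iff.not.mpr hP0))
  exact eq_of_maximal_mem_genHtRad hP h1 hA hmax ▸ hAprin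

end

theorem bezout_radicallyFinite_iff_general {R : Type*} [CommRing R] [IsDomain R] [IsBezout R] :
    RadicallyFinite R ↔ IsPrincipalIdealRing R :=
  ⟨fun hR => .of_prime fun _ => isPrincipal_of_radicallyFinite hR,
    fun _ => radicallyFinite_of_isPrincipalIdealRing⟩

/-- A Bézout domain of finite Krull dimension is radically finite if and only if it is
a principal ideal domain. -/
theorem bezout_radicallyFinite_iff {R : Type*} [CommRing R] [IsDomain R] [IsBezout R]
    (hdim : ringKrullDim R < ⊤) :
    RadicallyFinite R ↔ IsPrincipalIdealRing R :=
  bezout_radicallyFinite_iff_general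
end

section
/- Let R be a Hilbert domain of finite character that is not a field. Then R has Krull dimension one. -/
/-!
In a Jacobson ring a prime `P` is the intersection of the maximal ideals above it; if there are
only finitely many of them, primality forces `P` to contain, hence equal, one of them. Finite
character provides this finiteness for every nonzero prime, so every nonzero prime is maximal.
-/

theorem Ideal.IsPrime.isMaximal_of_finite_maximal_over {R : Type*} [CommRing R]
    [IsJacobsonRing R] {P : Ideal R} (hP : P.IsPrime)
    (hfin : {M : Ideal R | P ≤ M ∧ M.IsMaximal}.Finite) : P.IsMaximal := by
  have hjac : sInf {M : Ideal R | P ≤ M ∧ M.IsMaximal} ≤ P :=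
    (IsJacobsonRing.out' P hP.isRadical).le
  rw [← hfin.coe_toFinset, ← Finset.inf_id_eq_sInf, hP.inf_le'] at hjac
  obtain ⟨M, hM, hMP⟩ := hjac
  rw [hfin.mem_toFinset] at hM
  exact le_antisymm hM.1 hMP ▸ hM.2

theorem FiniteCharacter.finite_maximal_over {R : Type*} [CommRing R] (hfc : FiniteCharacter R)
    {I : Ideal R} (hI : I ≠ ⊥) : {M : Ideal R | I ≤ M ∧ M.IsMaximal}.Finite := by
  obtain ⟨x, hxI, hx0⟩ := Submodule.exists_mem_ne_zero_of_ne_bot hI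
  exact (hfc x hx0).subset fun M ⟨hIM, hM⟩ ↦ ⟨hM, hIM hxI⟩

theorem ringKrullDim_eq_one_of_krullDimLE_one {R : Type*} [CommRing R] [IsDomain R]
    [Ring.KrullDimLE 1 R] (hnf : ¬ IsField R) : ringKrullDim R = 1 := by
  refine eq_of_le_of_not_lt (Ring.krullDimLE_iff.mp ‹_›) fun h ↦ hnf ?_
  have : Ring.KrullDimLE 0 R := Ring.krullDimLE_iff.mpr (Order.le_of_lt_succ h)
  exact Ring.KrullDimLE.isField_of_isDomain

/-- A Hilbert (Jacobson) domain of finite character that is not a field has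
Krull dimension one. -/
theorem hilbert_finiteCharacter_krullDim_one {R : Type*} [CommRing R] [IsDomain R]
    [IsJacobsonRing R] (hfc : FiniteCharacter R) (hnf : ¬ IsField R) :
    ringKrullDim R = 1 := by
  have : Ring.KrullDimLE 1 R := .mk₁' fun P hP0 hP ↦
    hP.isMaximal_of_finite_maximal_over (hfc.finite_maximal_over hP0)
  exact ringKrullDim_eq_one_of_krullDimLE_one hnf
end

section
/- Let R be a Hilbert domain of finite character and let I be a nonzero proper ideal of R. Then the radical of I is a product of finitely many maximal ideals of R; in particular, the radical of I is a finite intersection of maximal ideals of R. -/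

private theorem prod_eq_inf_of_maximal {R : Type*} [CommRing R] (T : Finset (Ideal R))
    (h : ∀ M ∈ T, M.IsMaximal) : T.prod id = T.inf id := by
  classical
  revert h
  induction T using Finset.induction_on with
  | empty => intro _; simp
  | @insert a T ha ih =>
    intro hmem
    have ih' := ih (fun M hM => hmem M (Finset.mem_insert_of_mem hM))
    rw [Finset.prod_insert ha, Finset.inf_insert, ih', id]
    have hamax : a.IsMaximal := hmem a (Finset.mem_insert_self a T)
    refine Ideal.mul_eq_inf_of_coprime ?_
    by_contra hne
    have hle : T.inf id ≤ a := by
      rcases Ideal.exists_le_maximal _ hne with ⟨N, hN, hNle⟩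
      have : a = N := hamax.eq_of_le hN.ne_top (le_sup_left.trans hNle)
      exact this ▸ (le_sup_right.trans hNle)
    rw [← ih'] at hle
    obtain ⟨M, hM, hMa⟩ := (hamax.isPrime.prod_le).mp hle
    have : M = a := ((hmem M (Finset.mem_insert_of_mem hM)).eq_of_le hamax.1.1 hMa)
    exact ha (this ▸ hM)

/-- In a Hilbert domain of finite character, the radical of a nonzero proper ideal is a
product of finitely many maximal ideals; in particular it is a finite intersection of
maximal ideals. -/
theorem hilbert_finiteCharacter_radical_eq_prod_maximal {R : Type*} [CommRing R]
    [IsDomain R] [IsJacobsonRing R] (hfc : FiniteCharacter R)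
    (I : Ideal R) (hI0 : I ≠ ⊥) (hIT : I ≠ ⊤) :
    ∃ s : Multiset (Ideal R), (∀ M ∈ s, M.IsMaximal) ∧
      I.radical = s.prod ∧ I.radical = s.inf := by
  classical
  obtain ⟨x, hxI, hx0⟩ := Submodule.exists_mem_ne_zero_of_ne_bot hI0
  have hS : {M : Ideal R | M.IsMaximal ∧ I ≤ M}.Finite :=
    (hfc x hx0).subset (fun M hM => ⟨hM.1, hM.2 hxI⟩)
  set T := hS.toFinset with hT
  have hTmax : ∀ M ∈ T, M.IsMaximal := fun M hM => (hS.mem_toFinset.mp hM).1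
  have hrad : I.radical = T.inf id := by
    rw [Ideal.radical_eq_jacobson, Ideal.jacobson]
    have hset : {J : Ideal R | I ≤ J ∧ J.IsMaximal} = ↑T := by
      ext M; simp [hT, and_comm]
    rw [hset, ← Finset.inf_id_eq_sInf]
  refine ⟨T.val, ?_, ?_, ?_⟩
  · intro M hM; exact hTmax M hM
  · rw [hrad, ← prod_eq_inf_of_maximal T hTmax, Finset.prod_eq_multiset_prod,
      Multiset.map_id]
  · rw [hrad, Finset.inf_def, Multiset.map_id]
end

section
/- Let R be a unique factorization domain of finite character with Krull dimension 2. Then every maximal ideal M of R of height 2 is the radical of an ideal generated by two elements of R. -/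
/-! If `M` is principal it is its own radical. Otherwise pick `0 ≠ a ∈ M`: finite character
makes the set of primes `(p)`, `p` a prime factor of `a`, together with the maximal ideals
`N ≠ M` containing `a`, finite, so prime avoidance gives `b ∈ M` outside all of them. A prime
`J ⊇ (a, b)` contains some `(p)`, strictly since `b ∉ (p)`, so in dimension `≤ 2` it is maximal,
and then `b ∈ J` forces `J = M`. -/

open UniqueFactorizationMonoid

theorem Ideal.isMaximal_of_ne_bot_of_lt_of_ringKrullDim_le_two {R : Type*} [CommRing R]
    [IsDomain R] (hdim : ringKrullDim R ≤ 2) {P J : Ideal R} [P.IsPrime] [J.IsPrime]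
    (hP : P ≠ ⊥) (hPJ : P < J) : J.IsMaximal := by
  obtain ⟨N, hN, hJN⟩ := J.exists_le_maximal IsPrime.ne_top'
  obtain rfl | hJN := hJN.eq_or_lt
  · exact hN
  have hP1 : 1 ≤ P.height := by
    rwa [Order.one_le_iff_ne_zero, ne_eq, height_eq_zero_iff_eq_bot]
  have : (3 : ℕ∞) ≤ 2 := calc
    (3 : ℕ∞) = 1 + 1 + 1 := by norm_num
    _ ≤ P.height + 1 + 1 := by gcongr
    _ ≤ J.height + 1 := by gcongr; exact height_add_one_le_of_lt_of_isPrime hPJ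
    _ ≤ N.height := height_add_one_le_of_lt_of_isPrime hJN
    _ ≤ 2 := WithBot.coe_le_coe.mp ((ringKrullDim_le_iff_height_le 2).mp hdim hN.isPrime)
  norm_num at this

theorem UniqueFactorizationMonoid.exists_mem_factors_mem_of_mem {R : Type*} [CommRing R]
    [IsDomain R] [UniqueFactorizationMonoid R] {P : Ideal R} [P.IsPrime] {x : R} (hx0 : x ≠ 0)
    (hx : x ∈ P) : ∃ q ∈ factors x, q ∈ P :=
  (Ideal.IsPrime.multiset_prod_mem_iff_exists_mem ‹_› _).mp
    ((Ideal.mem_iff_of_associated (factors_prod hx0)).mpr hx)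

theorem FiniteCharacter.exists_mem_forall_notMem_span_factors {R : Type*} [CommRing R]
    [IsDomain R] [UniqueFactorizationMonoid R] (hfc : FiniteCharacter R) {M : Ideal R}
    [M.IsMaximal] (hM : ∀ x : R, M ≠ Ideal.span {x}) {a : R} (ha0 : a ≠ 0) :
    ∃ b ∈ M, (∀ p ∈ factors a, b ∉ Ideal.span {p}) ∧
      ∀ N : Ideal R, N.IsMaximal → a ∈ N → b ∈ N → N = M := by
  set S : Set (Ideal R) :=
    (fun p ↦ Ideal.span {p}) '' {p | p ∈ factors a} ∪ {N | N.IsMaximal ∧ a ∈ N} \ {M}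
  have hS : S.Finite :=
    ((Multiset.finite_toSet _).image _).union ((hfc a ha0).sdiff)
  have hSprime : ∀ P ∈ S, P ≠ ⊥ → P ≠ ⊥ → P.IsPrime := by
    rintro P (⟨p, hp, rfl⟩ | ⟨⟨hP, -⟩, -⟩) - -
    · exact (Ideal.span_singleton_prime (prime_of_factor p hp).ne_zero).mpr (prime_of_factor p hp)
    · exact hP.isPrime
  have hMS : M ∉ S := by
    rintro (⟨p, -, hp⟩ | ⟨-, hMM⟩)
    exacts [hM p hp.symm, hMM rfl]
  obtain ⟨b, hbM, hbS⟩ := Set.not_subset.mp <| (Ideal.subset_iUnion_iff_mem_of_isMaximal_of_finite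
    hS ⊥ ⊥ hSprime bot_ne_top bot_ne_top).not.mpr hMS
  simp only [Set.mem_iUnion, not_exists] at hbS
  refine ⟨b, hbM, fun p hp hbp ↦ hbS _ (.inl ⟨p, hp, rfl⟩) hbp, fun N hN haN hbN ↦ ?_⟩
  by_contra hNM
  exact hbS N (.inr ⟨⟨hN, haN⟩, hNM⟩) hbN

theorem radical_span_pair_eq_of_forall_notMem {R : Type*} [CommRing R] [IsDomain R]
    [UniqueFactorizationMonoid R] (hdim : ringKrullDim R ≤ 2) {M : Ideal R} [M.IsMaximal]
    {a b : R} (ha0 : a ≠ 0) (haM : a ∈ M) (hbM : b ∈ M)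
    (hbp : ∀ p ∈ factors a, b ∉ Ideal.span {p})
    (hbN : ∀ N : Ideal R, N.IsMaximal → a ∈ N → b ∈ N → N = M) :
    (Ideal.span {a, b}).radical = M := by
  have hprime : ∀ J : Ideal R, J.IsPrime → Ideal.span {a, b} ≤ J → J = M := by
    intro J hJ hab
    have haJ : a ∈ J := hab (Ideal.subset_span (by simp))
    have hbJ : b ∈ J := hab (Ideal.subset_span (by simp))
    obtain ⟨q, hqa, hqJ⟩ := exists_mem_factors_mem_of_mem ha0 haJ
    have hq := prime_of_factor q hqa
    have : (Ideal.span {q}).IsPrime := (Ideal.span_singleton_prime hq.ne_zero).mpr hq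
    have hqlt : Ideal.span {q} < J :=
      lt_of_le_of_ne ((Ideal.span_singleton_le_iff_mem J).mpr hqJ)
        fun h ↦ hbp q hqa (h ▸ hbJ)
    exact hbN J (Ideal.isMaximal_of_ne_bot_of_lt_of_ringKrullDim_le_two hdim
      (by simpa using hq.ne_zero) hqlt) haJ hbJ
  rw [Ideal.radical_eq_sInf]
  refine le_antisymm (sInf_le ⟨?_, inferInstance⟩) (le_sInf fun J hJ ↦ (hprime J hJ.2 hJ.1).ge)
  simp [Ideal.span_le, Set.insert_subset_iff, haM, hbM]

theorem ufd_finiteCharacter_dim_two_maximal_radical_two_gen_general {R : Type*} [CommRing R]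
    [IsDomain R] [UniqueFactorizationMonoid R] (hfc : FiniteCharacter R)
    (hdim : ringKrullDim R = 2) (M : Ideal R) (hM : M.IsMaximal) :
    ∃ a b : R, M = (Ideal.span ({a, b} : Set R)).radical := by
  by_cases hprin : ∃ x : R, M = Ideal.span {x}
  · obtain ⟨x, rfl⟩ := hprin
    exact ⟨x, x, by simp [hM.isPrime.radical]⟩
  push Not at hprin
  obtain ⟨a, haM, ha0⟩ := Submodule.exists_mem_ne_zero_of_ne_bot (by simpa using hprin 0)
  obtain ⟨b, hbM, hbp, hbN⟩ := hfc.exists_mem_forall_notMem_span_factors hprin ha0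
  exact ⟨a, b, (radical_span_pair_eq_of_forall_notMem hdim.le ha0 haM hbM hbp hbN).symm⟩

/-- In a UFD of finite character with Krull dimension 2, every maximal ideal of height 2
is the radical of an ideal generated by two elements. -/
theorem ufd_finiteCharacter_dim_two_maximal_radical_two_gen {R : Type*} [CommRing R]
    [IsDomain R] [UniqueFactorizationMonoid R] (hfc : FiniteCharacter R)
    (hdim : ringKrullDim R = 2) (M : Ideal R) (hM : M.IsMaximal)
    (hht : idealHeight R M = 2) :
    ∃ a b : R, M = (Ideal.span ({a, b} : Set R)).radical :=
  ufd_finiteCharacter_dim_two_maximal_radical_two_gen_general hfc hdim M hM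
end
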